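/- Let n ≥ 2 and m ≥ 0 be integers. The family of bracket monomials p_{i₁j₁}⋯p_{i_mj_m}, indexed by the Rumer diagrams on n vertices with m edges (i.e., by the multisets {(i₁,j₁),…,(i_m,j_m)} of m pairs with 1 ≤ i_s < j_s ≤ n having no two crossing edges), is a basis of the ℂ-linear span of all bracket monomials of degree m in ℂ[x₁⁽¹⁾, x₂⁽¹⁾, …, x₁⁽ⁿ⁾, x₂⁽ⁿ⁾]; in particular these bracket monomials are linearly independent over ℂ. -/

import Mathlib

/-!
Give `x₂⁽ⁱ⁾` weight `i` and `x₁⁽ⁱ⁾` weight `0`. For `i < j` the term `x₁⁽ⁱ⁾x₂⁽ʲ⁾` is the unique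
term of top weight of `p_{ij}`, so a bracket monomial has the unique top-weight monomial
`∏ x₁⁽ⁱ⁾x₂⁽ʲ⁾` (its diagonal term), with coefficient one. The diagonal term only records the
multisets of left and right endpoints, but a non-crossing diagram is recovered from them: the edge
leaving the last left endpoint `i` must end at the first right endpoint after `i`. Distinct
diagonal terms give linear independence.

Spanning is straightening: for `i < j < k < l` the Plücker relation
`p_{ik}p_{jl} = p_{ij}p_{kl} + p_{il}p_{jk}` trades a crossing pair for two non-crossing ones, and
both strictly decrease `∑ φ(j - i)` over the edges, for the concave `φ(x) = x(n - x)`.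
-/

open MvPolynomial

/-- Two chords `(i,j)` and `(k,l)` (with `i < j`, `k < l`) of a circle with `n` marked
points cross iff `i < k < j < l` or `k < i < l < j`. -/
def Crosses {n : ℕ} (e f : Fin n × Fin n) : Prop :=
  (e.1 < f.1 ∧ f.1 < e.2 ∧ e.2 < f.2) ∨ (f.1 < e.1 ∧ e.1 < f.2 ∧ f.2 < e.2)

/-- The bracket `p_{ab} = x₁⁽ᵃ⁾x₂⁽ᵇ⁾ − x₂⁽ᵃ⁾x₁⁽ᵇ⁾` in the polynomial ring
`ℂ[x₁⁽¹⁾, x₂⁽¹⁾, …, x₁⁽ⁿ⁾, x₂⁽ⁿ⁾]`. -/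
noncomputable def bracket (n : ℕ) (a b : Fin n) : MvPolynomial (Fin n × Fin 2) ℂ :=
  X (a, 0) * X (b, 1) - X (a, 1) * X (b, 0)

/-- The bracket monomial `p_{i₁j₁}⋯p_{i_mj_m}` whose valence scheme is the multiset `E`
of edges `(i₁,j₁),…,(i_m,j_m)`. -/
noncomputable def bracketMonomial (n : ℕ) (E : Multiset (Fin n × Fin n)) :
    MvPolynomial (Fin n × Fin 2) ℂ :=
  (E.map fun e => bracket n e.1 e.2).prod

/-- The Rumer diagrams on `n` vertices with `m` edges. -/
def RumerDiagram (n m : ℕ) : Type :=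
  {E : Multiset (Fin n × Fin n) // Multiset.card E = m ∧ (∀ e ∈ E, e.1 < e.2) ∧
    ∀ e ∈ E, ∀ f ∈ E, ¬ Crosses e f}

namespace MvPolynomial

variable {σ R : Type*}

def IsMonicLeadingExponent [CommSemiring R] (w : σ → ℕ) (p : MvPolynomial σ R)
    (d : σ →₀ ℕ) : Prop :=
  p.coeff d = 1 ∧ ∀ e ∈ p.support, e ≠ d → Finsupp.weight w e < Finsupp.weight w d

namespace IsMonicLeadingExponent

variable [CommSemiring R] {w : σ → ℕ} {p q : MvPolynomial σ R} {d d' : σ →₀ ℕ}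

theorem weight_le (h : IsMonicLeadingExponent w p d) {e : σ →₀ ℕ} (he : e ∈ p.support) :
    Finsupp.weight w e ≤ Finsupp.weight w d := by
  by_cases hed : e = d
  · rw [hed]
  · exact (h.2 e he hed).le

theorem one : IsMonicLeadingExponent w (1 : MvPolynomial σ R) 0 := by
  classical
  refine ⟨coeff_zero_one, fun e he hne => ?_⟩
  rw [mem_support_iff, coeff_one, if_neg (Ne.symm hne)] at he
  exact absurd rfl he

theorem mul (hp : IsMonicLeadingExponent w p d) (hq : IsMonicLeadingExponent w q d') :
    IsMonicLeadingExponent w (p * q) (d + d') := by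
  classical
  have key : ∀ a ∈ p.support, ∀ b ∈ q.support, (a, b) ≠ (d, d') →
      Finsupp.weight w (a + b) < Finsupp.weight w (d + d') := by
    intro a ha b hb hab
    rw [map_add, map_add]
    by_cases had : a = d
    · subst had
      have := hq.2 b hb fun hbd => hab (by rw [hbd])
      omega
    · have := hp.2 a ha had
      have := hq.weight_le hb
      omega
  refine ⟨?_, fun e he hne => ?_⟩
  · rw [coeff_mul, Finset.sum_eq_single_of_mem (d, d') (by simp), hp.1, hq.1, one_mul]
    rintro ⟨a, b⟩ hab hne
    rw [Finset.HasAntidiagonal.mem_antidiagonal] at hab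
    by_contra hcoeff
    have ha : a ∈ p.support := mem_support_iff.2 (left_ne_zero_of_mul hcoeff)
    have hb : b ∈ q.support := mem_support_iff.2 (right_ne_zero_of_mul hcoeff)
    exact (key a ha b hb hne).ne (by rw [hab])
  · obtain ⟨a, ha, b, hb, rfl⟩ := Finset.mem_add.1 (support_mul p q he)
    exact key a ha b hb fun hab => hne (by simp_all)

theorem multiset_prod {ι : Type*} {s : Multiset ι} {f : ι → MvPolynomial σ R}
    {d : ι → σ →₀ ℕ} (h : ∀ i ∈ s, IsMonicLeadingExponent w (f i) (d i)) :
    IsMonicLeadingExponent w (s.map f).prod (s.map d).sum := by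
  induction s using Multiset.induction_on with
  | empty => exact one
  | cons i s ih =>
    rw [Multiset.forall_mem_cons] at h
    simpa only [Multiset.map_cons, Multiset.prod_cons, Multiset.sum_cons] using h.1.mul (ih h.2)

end IsMonicLeadingExponent

theorem linearIndependent_of_isMonicLeadingExponent {ι : Type*} [CommRing R] {w : σ → ℕ}
    {f : ι → MvPolynomial σ R} {d : ι → σ →₀ ℕ} (hd : Function.Injective d)
    (hf : ∀ i, IsMonicLeadingExponent w (f i) (d i)) : LinearIndependent R f := by
  rw [linearIndependent_iff]
  intro l hl
  by_contra hne
  obtain ⟨i₀, hi₀, hmax⟩ := Finset.exists_max_image l.support (fun i => Finsupp.weight w (d i))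
    (Finsupp.support_nonempty_iff.2 hne)
  have hcoeff := congrArg (coeff (d i₀)) hl
  rw [Finsupp.linearCombination_apply, Finsupp.sum, coeff_sum, coeff_zero,
    Finset.sum_eq_single_of_mem i₀ hi₀, coeff_smul, (hf i₀).1, smul_eq_mul, mul_one] at hcoeff
  · exact Finsupp.mem_support_iff.1 hi₀ hcoeff
  intro i hi hii₀
  rw [coeff_smul]
  by_contra hc
  have hmem : d i₀ ∈ (f i).support := mem_support_iff.2 (right_ne_zero_of_smul hc)
  have := (hf i).2 _ hmem (hd.ne (Ne.symm hii₀))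
  have := hmax i hi
  omega

end MvPolynomial

section NoncrossingDiagram

variable {n : ℕ}

theorem mem_of_max_fst_of_min_snd {E : Multiset (Fin n × Fin n)} (hlt : ∀ e ∈ E, e.1 < e.2)
    (hnc : ∀ e ∈ E, ∀ f ∈ E, ¬ Crosses e f) {i j : Fin n} (hi : i ∈ E.map Prod.fst)
    (hi_max : ∀ a ∈ E.map Prod.fst, a ≤ i) (hj : j ∈ E.map Prod.snd) (hij : i < j)
    (hj_min : ∀ b ∈ E.map Prod.snd, i < b → j ≤ b) : (i, j) ∈ E := by
  obtain ⟨e, he, rfl⟩ := Multiset.mem_map.1 hi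
  obtain ⟨f, hf, rfl⟩ := Multiset.mem_map.1 hj
  have hfe : f.1 ≤ e.1 := hi_max _ (Multiset.mem_map_of_mem _ hf)
  have hef : f.2 ≤ e.2 := hj_min _ (Multiset.mem_map_of_mem _ he) (hlt e he)
  by_contra hnot
  have hfe' : f.1 < e.1 := lt_of_le_of_ne hfe fun h => hnot (by rwa [← h])
  have hef' : f.2 < e.2 := lt_of_le_of_ne hef fun h => hnot (by rwa [h])
  exact hnc f hf e he (Or.inl ⟨hfe', hij, hef'⟩)

theorem exists_mem_forced_by_endpoints {E : Multiset (Fin n × Fin n)} (hE : E ≠ 0)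
    (hlt : ∀ e ∈ E, e.1 < e.2) : ∃ p : Fin n × Fin n, ∀ F : Multiset (Fin n × Fin n),
      (∀ f ∈ F, f.1 < f.2) → (∀ e ∈ F, ∀ f ∈ F, ¬ Crosses e f) →
      F.map Prod.fst = E.map Prod.fst → F.map Prod.snd = E.map Prod.snd → p ∈ F := by
  obtain ⟨e, he, he_max⟩ := Multiset.exists_max_image Prod.fst hE
  have hR : (E.map Prod.snd).filter (e.1 < ·) ≠ 0 :=
    Multiset.card_pos.1 (Multiset.card_pos_iff_exists_mem.2
      ⟨e.2, Multiset.mem_filter.2 ⟨Multiset.mem_map_of_mem _ he, hlt e he⟩⟩)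
  obtain ⟨j, hj, hj_min⟩ := Multiset.exists_min_image id hR
  rw [Multiset.mem_filter] at hj
  refine ⟨(e.1, j), fun F hFlt hFnc hfst hsnd => ?_⟩
  refine mem_of_max_fst_of_min_snd hFlt hFnc (hfst ▸ Multiset.mem_map_of_mem _ he) ?_
    (hsnd ▸ hj.1) hj.2 fun b hb hib => hj_min b (Multiset.mem_filter.2 ⟨hsnd ▸ hb, hib⟩)
  rw [hfst]
  intro a ha
  obtain ⟨f, hf, rfl⟩ := Multiset.mem_map.1 ha
  exact he_max f hf

theorem eq_of_map_fst_eq_of_map_snd_eq {E F : Multiset (Fin n × Fin n)}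
    (hElt : ∀ e ∈ E, e.1 < e.2) (hEnc : ∀ e ∈ E, ∀ f ∈ E, ¬ Crosses e f)
    (hFlt : ∀ f ∈ F, f.1 < f.2) (hFnc : ∀ e ∈ F, ∀ f ∈ F, ¬ Crosses e f)
    (hfst : E.map Prod.fst = F.map Prod.fst) (hsnd : E.map Prod.snd = F.map Prod.snd) :
    E = F := by
  induction E using Multiset.strongInductionOn generalizing F with
  | ih E ih =>
  rcases eq_or_ne E 0 with rfl | hE
  · exact (Multiset.map_eq_zero.1 hfst.symm).symm
  obtain ⟨p, hp⟩ := exists_mem_forced_by_endpoints hE hElt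
  have hpE := hp E hElt hEnc rfl rfl
  have hpF := hp F hFlt hFnc hfst.symm hsnd.symm
  rw [← Multiset.cons_erase hpE, ← Multiset.cons_erase hpF] at hfst hsnd ⊢
  simp only [Multiset.map_cons, Multiset.cons_inj_right] at hfst hsnd
  have hsub {G : Multiset (Fin n × Fin n)} {e : Fin n × Fin n} (he : e ∈ G.erase p) : e ∈ G :=
    Multiset.mem_of_mem_erase he
  rw [ih (E.erase p) (Multiset.erase_lt.2 hpE) (fun e he => hElt e (hsub he))
    (fun e he f hf => hEnc e (hsub he) f (hsub hf)) (fun e he => hFlt e (hsub he))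
    (fun e he f hf => hFnc e (hsub he) f (hsub hf)) hfst hsnd]

end NoncrossingDiagram

section DiagonalTerm

variable {n : ℕ}

def rowWeight (n : ℕ) : Fin n × Fin 2 → ℕ := fun v => v.2.val * v.1.val

noncomputable def diagonalExponent (E : Multiset (Fin n × Fin n)) : Fin n × Fin 2 →₀ ℕ :=
  (E.map fun e => Finsupp.single (e.1, 0) 1 + Finsupp.single (e.2, 1) 1).sum

theorem isMonicLeadingExponent_bracket {a b : Fin n} (hab : a < b) :
    IsMonicLeadingExponent (rowWeight n) (bracket n a b)
      (Finsupp.single (a, 0) 1 + Finsupp.single (b, 1) 1) := by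
  classical
  set d := Finsupp.single (a, (0 : Fin 2)) 1 + Finsupp.single (b, 1) 1
  set d' := Finsupp.single (a, (1 : Fin 2)) 1 + Finsupp.single (b, 0) 1
  have hbracket : bracket n a b = monomial d 1 - monomial d' 1 := by
    simp only [bracket, X, monomial_mul, one_mul, d, d']
  have hdd' : d' ≠ d := by
    intro h
    have := DFunLike.congr_fun h (a, 0)
    simp [d, d', hab.ne] at this
  refine ⟨by rw [hbracket, coeff_sub, coeff_monomial, coeff_monomial, if_pos rfl, if_neg hdd',
    sub_zero], fun e he hne => ?_⟩
  have he' : e = d' := by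
    by_contra h
    rw [hbracket, mem_support_iff, coeff_sub, coeff_monomial, coeff_monomial,
      if_neg (Ne.symm hne), if_neg (Ne.symm h), sub_zero] at he
    exact he rfl
  subst he'
  simpa [d, d', rowWeight, Finsupp.weight_single] using hab

theorem isMonicLeadingExponent_bracketMonomial {E : Multiset (Fin n × Fin n)}
    (hlt : ∀ e ∈ E, e.1 < e.2) :
    IsMonicLeadingExponent (rowWeight n) (bracketMonomial n E) (diagonalExponent E) :=
  IsMonicLeadingExponent.multiset_prod fun e he => isMonicLeadingExponent_bracket (hlt e he)

theorem diagonalExponent_cons (e : Fin n × Fin n) (E : Multiset (Fin n × Fin n)) :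
    diagonalExponent (e ::ₘ E) =
      Finsupp.single (e.1, 0) 1 + Finsupp.single (e.2, 1) 1 + diagonalExponent E := by
  rw [diagonalExponent, Multiset.map_cons, Multiset.sum_cons, diagonalExponent]

theorem diagonalExponent_apply_zero (E : Multiset (Fin n × Fin n)) (i : Fin n) :
    diagonalExponent E (i, 0) = (E.map Prod.fst).count i := by
  classical
  induction E using Multiset.induction_on with
  | empty => simp [diagonalExponent]
  | cons e E ih =>
    rw [diagonalExponent_cons, Finsupp.add_apply, Finsupp.add_apply, ih, Multiset.map_cons,
      Multiset.count_cons]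
    simp [Finsupp.single_apply, eq_comm, add_comm]

theorem diagonalExponent_apply_one (E : Multiset (Fin n × Fin n)) (j : Fin n) :
    diagonalExponent E (j, 1) = (E.map Prod.snd).count j := by
  classical
  induction E using Multiset.induction_on with
  | empty => simp [diagonalExponent]
  | cons e E ih =>
    rw [diagonalExponent_cons, Finsupp.add_apply, Finsupp.add_apply, ih, Multiset.map_cons,
      Multiset.count_cons]
    simp [Finsupp.single_apply, eq_comm, add_comm]

theorem RumerDiagram.diagonalExponent_injective (m : ℕ) :
    Function.Injective fun E : RumerDiagram n m => diagonalExponent E.1 := by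
  intro E F h
  have h' := DFunLike.congr_fun h
  refine Subtype.ext (eq_of_map_fst_eq_of_map_snd_eq E.2.2.1 E.2.2.2 F.2.2.1 F.2.2.2
    (Multiset.ext.2 fun i => ?_) (Multiset.ext.2 fun j => ?_))
  · simpa only [diagonalExponent_apply_zero] using h' (i, 0)
  · simpa only [diagonalExponent_apply_one] using h' (j, 1)

end DiagonalTerm

section Straightening

variable {n : ℕ}

theorem bracket_plucker (i j k l : Fin n) :
    bracket n i k * bracket n j l =
      bracket n i j * bracket n k l + bracket n i l * bracket n j k := by
  simp only [bracket]
  ring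

theorem bracketMonomial_plucker (i j k l : Fin n) (R : Multiset (Fin n × Fin n)) :
    bracketMonomial n ((i, k) ::ₘ (j, l) ::ₘ R) =
      bracketMonomial n ((i, j) ::ₘ (k, l) ::ₘ R) +
        bracketMonomial n ((i, l) ::ₘ (j, k) ::ₘ R) := by
  simp only [bracketMonomial, Multiset.map_cons, Multiset.prod_cons, ← mul_assoc]
  rw [bracket_plucker, add_mul]

theorem exists_eq_cons_cons_of_crossing {E : Multiset (Fin n × Fin n)}
    (h : ¬ ∀ e ∈ E, ∀ f ∈ E, ¬ Crosses e f) : ∃ (i j k l : Fin n) (R : Multiset (Fin n × Fin n)),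
      i < j ∧ j < k ∧ k < l ∧ E = (i, k) ::ₘ (j, l) ::ₘ R := by
  push Not at h
  obtain ⟨e, he, f, hf, hcross⟩ := h
  have hfe : f ≠ e := by
    rintro rfl
    rcases hcross with ⟨h, -⟩ | ⟨h, -⟩ <;> exact lt_irrefl _ h
  have hE : E = e ::ₘ f ::ₘ (E.erase e).erase f := by
    rw [Multiset.cons_erase ((Multiset.mem_erase_of_ne hfe).2 hf), Multiset.cons_erase he]
  rcases hcross with ⟨h₁, h₂, h₃⟩ | ⟨h₁, h₂, h₃⟩
  · exact ⟨e.1, f.1, e.2, f.2, _, h₁, h₂, h₃, hE⟩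
  · exact ⟨f.1, e.1, f.2, e.2, _, h₁, h₂, h₃, hE.trans (Multiset.cons_swap _ _ _)⟩

def chordPotential (n : ℕ) (E : Multiset (Fin n × Fin n)) : ℕ :=
  (E.map fun e => ((e.2 : ℕ) - e.1) * (n - ((e.2 : ℕ) - e.1))).sum

-- With `φ x = x * (n - x)` and gaps `a, b, c` between `i, j, k, l`, the two resolutions lower
-- `φ (a + b) + φ (b + c)` by `2 b (n - (a + b + c))` and by `2 a c` respectively.
theorem straighten_potential_lt {n i j k l : ℕ} (hij : i < j) (hjk : j < k) (hkl : k < l)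
    (hln : l < n) :
    (j - i) * (n - (j - i)) + (l - k) * (n - (l - k)) <
        (k - i) * (n - (k - i)) + (l - j) * (n - (l - j)) ∧
      (l - i) * (n - (l - i)) + (k - j) * (n - (k - j)) <
        (k - i) * (n - (k - i)) + (l - j) * (n - (l - j)) := by
  have h₁ : j - i ≤ n := by omega
  have h₂ : l - k ≤ n := by omega
  have h₃ : k - i ≤ n := by omega
  have h₄ : l - j ≤ n := by omega
  have h₅ : l - i ≤ n := by omega
  have h₆ : k - j ≤ n := by omega
  zify [hij.le, hjk.le, hkl.le, hij.le.trans hjk.le, hjk.le.trans hkl.le,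
    (hij.trans hjk).le.trans hkl.le, h₁, h₂, h₃, h₄, h₅, h₆]
  have hac : 0 < ((j : ℤ) - i) * (l - k) := mul_pos (by omega) (by omega)
  have hb : 0 < ((k : ℤ) - j) * (n - l) := mul_pos (by omega) (by omega)
  constructor <;> nlinarith

theorem chordPotential_straighten_lt {i j k l : Fin n} (R : Multiset (Fin n × Fin n))
    (hij : i < j) (hjk : j < k) (hkl : k < l) :
    chordPotential n ((i, j) ::ₘ (k, l) ::ₘ R) < chordPotential n ((i, k) ::ₘ (j, l) ::ₘ R) ∧
      chordPotential n ((i, l) ::ₘ (j, k) ::ₘ R) <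
        chordPotential n ((i, k) ::ₘ (j, l) ::ₘ R) := by
  have := straighten_potential_lt hij hjk hkl l.isLt
  simp only [chordPotential, Multiset.map_cons, Multiset.sum_cons]
  omega

theorem bracketMonomial_mem_span_rumer {m : ℕ} {E : Multiset (Fin n × Fin n)}
    (hcard : Multiset.card E = m) (hlt : ∀ e ∈ E, e.1 < e.2) :
    bracketMonomial n E ∈
      Submodule.span ℂ (Set.range fun D : RumerDiagram n m => bracketMonomial n D.1) := by
  induction hN : chordPotential n E using Nat.strong_induction_on generalizing E with
  | _ N ih =>
  by_cases hnc : ∀ e ∈ E, ∀ f ∈ E, ¬ Crosses e f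
  · exact Submodule.subset_span ⟨⟨E, hcard, hlt, hnc⟩, rfl⟩
  obtain ⟨i, j, k, l, R, hij, hjk, hkl, rfl⟩ := exists_eq_cons_cons_of_crossing hnc
  obtain ⟨hlt₁, hlt₂⟩ := chordPotential_straighten_lt R hij hjk hkl
  simp only [Multiset.forall_mem_cons] at hlt
  simp only [Multiset.card_cons] at hcard
  rw [bracketMonomial_plucker]
  refine Submodule.add_mem _ (ih _ (hN ▸ hlt₁) ?_ ?_ rfl) (ih _ (hN ▸ hlt₂) ?_ ?_ rfl)
  · simpa using hcard
  · simp only [Multiset.forall_mem_cons]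
    exact ⟨hij, hkl, hlt.2.2⟩
  · simpa using hcard
  · simp only [Multiset.forall_mem_cons]
    exact ⟨hij.trans (hjk.trans hkl), hjk, hlt.2.2⟩

end Straightening

theorem rumer_bracket_monomials_linearIndependent_and_span_general
    (n m : ℕ) :
    LinearIndependent ℂ (fun E : RumerDiagram n m => bracketMonomial n E.1) ∧
      Submodule.span ℂ (Set.range fun E : RumerDiagram n m => bracketMonomial n E.1)
        = Submodule.span ℂ
            {g : MvPolynomial (Fin n × Fin 2) ℂ |
              ∃ E : Multiset (Fin n × Fin n), Multiset.card E = m ∧ (∀ e ∈ E, e.1 < e.2) ∧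
                g = bracketMonomial n E} := by
  refine ⟨linearIndependent_of_isMonicLeadingExponent (RumerDiagram.diagonalExponent_injective m)
    fun E => isMonicLeadingExponent_bracketMonomial E.2.2.1, le_antisymm ?_ ?_⟩
  · refine Submodule.span_mono ?_
    rintro _ ⟨E, rfl⟩
    exact ⟨E.1, E.2.1, E.2.2.1, rfl⟩
  · refine Submodule.span_le.2 ?_
    rintro _ ⟨E, hcard, hlt, rfl⟩
    exact bracketMonomial_mem_span_rumer hcard hlt

theorem rumer_bracket_monomials_linearIndependent_and_span
    (n m : ℕ) (hn : 2 ≤ n) :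
    LinearIndependent ℂ (fun E : RumerDiagram n m => bracketMonomial n E.1) ∧
      Submodule.span ℂ (Set.range fun E : RumerDiagram n m => bracketMonomial n E.1)
        = Submodule.span ℂ
            {g : MvPolynomial (Fin n × Fin 2) ℂ |
              ∃ E : Multiset (Fin n × Fin n), Multiset.card E = m ∧ (∀ e ∈ E, e.1 < e.2) ∧
                g = bracketMonomial n E} :=
  rumer_bracket_monomials_linearIndependent_and_span_general n m
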